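/- Let (A,(p_l)) be a Fréchet algebra with a bounded approximate identity and let n ∈ ℕ. Then the unitization A# is 2n-weakly amenable if and only if A is 2n-weakly amenable. -/

import Mathlib

noncomputable section

open Filter Topology

/-- A topological `ℂ`-module `X` equipped with left and right actions of `A`,
each acting by continuous linear maps on `X`.  This is the data underlying a
locally convex `A`-bimodule. -/
structure BiMod (A : Type) : Type 1 where
  X : Type
  [ag : AddCommGroup X]
  [md : Module ℂ X]
  [ts : TopologicalSpace X]
  l : A → X →L[ℂ] X
  r : A → X →L[ℂ] X

attribute [instance] BiMod.ag BiMod.md BiMod.ts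

namespace BiMod

variable {A : Type}

/-- The strong dual of a bimodule, with the canonical dual actions
`⟨a·f, x⟩ = ⟨f, x·a⟩` and `⟨f·a, x⟩ = ⟨f, a·x⟩`.  The dual carries the strong
topology (uniform convergence on von Neumann bounded sets), which is the default
topology on `X →L[ℂ] ℂ` in Mathlib. -/
def dual (M : BiMod A) : BiMod A where
  X := M.X →L[ℂ] ℂ
  l a := ContinuousLinearMap.precomp ℂ (M.r a)
  r a := ContinuousLinearMap.precomp ℂ (M.l a)

/-- The `n`-th iterated strong dual of a bimodule (`iterDual M 0 = M`). -/
def iterDual (M : BiMod A) : ℕ → BiMod A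
  | 0 => M
  | n + 1 => (M.iterDual n).dual

instance dualCSM (M : BiMod A) : ContinuousSMul ℂ (M.dual).X :=
  inferInstanceAs (ContinuousSMul ℂ (M.X →L[ℂ] ℂ))

/-- Evaluation (canonical) embedding of a bimodule into its double dual. -/
def evalEmbed (M : BiMod A) [ContinuousSMul ℂ M.X] (x : M.X) : M.dual.dual.X :=
  show (M.X →L[ℂ] ℂ) →L[ℂ] ℂ from
    ⟨⟨⟨fun f => f x, fun _ _ => rfl⟩, fun _ _ => rfl⟩, continuous_eval_const x⟩

/-- `ContinuousSMul` holds at every level of the iterated dual. -/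
def iterCSM (M : BiMod A) (h : ContinuousSMul ℂ M.X) :
    ∀ n, ContinuousSMul ℂ (M.iterDual n).X
  | 0 => h
  | n + 1 => inferInstanceAs (ContinuousSMul ℂ ((M.iterDual n).X →L[ℂ] ℂ))

/-- The canonical (iterated evaluation) embedding `M → M^(2n)`. -/
def iterEmbed (M : BiMod A) (h : ContinuousSMul ℂ M.X) :
    ∀ n : ℕ, M.X → (M.iterDual (2 * n)).X
  | 0, x => x
  | n + 1, x =>
    haveI := M.iterCSM h (2 * n)
    (M.iterDual (2 * n)).evalEmbed (M.iterEmbed h n x)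

/-- The pairing between the `(k+1)`-st dual and the `k`-th dual. -/
def pairApply (M : BiMod A) (k : ℕ) (F : (M.iterDual (k + 1)).X)
    (x : (M.iterDual k).X) : ℂ := (show (M.iterDual k).X →L[ℂ] ℂ from F) x

end BiMod

section Defs

variable (A : Type) [NonUnitalRing A] [Module ℂ A] [SMulCommClass ℂ A A] [IsScalarTower ℂ A A]
  [TopologicalSpace A] [IsTopologicalAddGroup A] [ContinuousSMul ℂ A] [ContinuousMul A]

/-- A continuous derivation from `A` into a bimodule. -/
def IsContDerivation (M : BiMod A) (D : A →L[ℂ] M.X) : Prop :=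
  ∀ a b : A, D (a * b) = M.l a (D b) + M.r b (D a)

/-- An inner derivation : `D a = a·x - x·a` for some `x`. -/
def IsInnerDerivation (M : BiMod A) (D : A →L[ℂ] M.X) : Prop :=
  ∃ x : M.X, ∀ a : A, D a = M.l a x - M.r a x

/-- `A` as a bimodule over itself, via left/right multiplication. -/
def selfBiMod : BiMod A where
  X := A
  l a := ⟨LinearMap.mulLeft ℂ a, continuous_mul_left a⟩
  r a := ⟨LinearMap.mulRight ℂ a, continuous_mul_right a⟩

/-- `A` is `n`-weakly amenable if every continuous derivation from `A` into the
`n`-th iterated strong dual `A^(n)` (with the canonical module actions) is inner. -/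
def NWeaklyAmenable (n : ℕ) : Prop :=
  ∀ D : A →L[ℂ] ((selfBiMod A).iterDual n).X,
    IsContDerivation A ((selfBiMod A).iterDual n) D →
      IsInnerDerivation A ((selfBiMod A).iterDual n) D

/-- A closed two-sided ideal `I` of `A` (a closed `ℂ`-subalgebra which absorbs
multiplication on both sides) as an `A`-bimodule. -/
def idealBiMod (I : NonUnitalSubalgebra ℂ A)
    (hl : ∀ a : A, ∀ x ∈ I, a * x ∈ I) (hr : ∀ a : A, ∀ x ∈ I, x * a ∈ I) : BiMod A where
  X := ↥I
  l a := ⟨{ toFun := fun x => (⟨a * (x : A), hl a x x.2⟩ : ↥I)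
            map_add' := fun x y => by ext; simp [mul_add]
            map_smul' := fun c x => by ext; simp [mul_smul_comm] },
          (Continuous.subtype_mk ((continuous_mul_left a).comp continuous_subtype_val) _)⟩
  r a := ⟨{ toFun := fun x => (⟨(x : A) * a, hr a x x.2⟩ : ↥I)
            map_add' := fun x y => by ext; simp [add_mul]
            map_smul' := fun c x => by ext; simp [smul_mul_assoc] },
          (Continuous.subtype_mk ((continuous_mul_right a).comp continuous_subtype_val) _)⟩

/-- `A` is `n`-ideally amenable if for every closed two-sided ideal `I` of `A`,
every continuous derivation from `A` into `I^(n)` is inner. -/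
def NIdeallyAmenable (n : ℕ) : Prop :=
  ∀ (I : NonUnitalSubalgebra ℂ A), IsClosed (I : Set A) →
    ∀ (hl : ∀ a : A, ∀ x ∈ I, a * x ∈ I) (hr : ∀ a : A, ∀ x ∈ I, x * a ∈ I),
      ∀ D : A →L[ℂ] ((idealBiMod A I hl hr).iterDual n).X,
        IsContDerivation A ((idealBiMod A I hl hr).iterDual n) D →
          IsInnerDerivation A ((idealBiMod A I hl hr).iterDual n) D

/-- The topology of `A` is generated by an increasing sequence of submultiplicative
seminorms.  Together with completeness and Hausdorffness this says that `A` is a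
Fréchet algebra. -/
def FrechetSeminorms : Prop :=
  ∃ p : SeminormFamily ℂ A ℕ, WithSeminorms p ∧ (∀ n, p n ≤ p (n + 1)) ∧
    ∀ (n : ℕ) (x y : A), p n (x * y) ≤ p n x * p n y

/-- `A` has an identity element. -/
def HasIdentity : Prop := ∃ e : A, ∀ a : A, e * a = a ∧ a * e = a

end Defs

section Montel

variable (E : Type) [AddCommGroup E] [Module ℂ E] [TopologicalSpace E]

/-- A Montel space: a barrelled locally convex Hausdorff space in which every closed
(von Neumann) bounded subset is compact. -/
def IsMontelSpace : Prop :=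
  LocallyConvexSpace ℝ E ∧ T2Space E ∧ BarrelledSpace ℂ E ∧
    ∀ s : Set E, IsClosed s → Bornology.IsVonNBounded ℂ s → IsCompact s

end Montel

section More

variable (A : Type) [NonUnitalRing A] [Module ℂ A] [SMulCommClass ℂ A A] [IsScalarTower ℂ A A]
  [TopologicalSpace A] [IsTopologicalAddGroup A] [ContinuousSMul ℂ A] [ContinuousMul A]

/-- A bounded approximate identity: a bounded net `(e_i)` with `e_i * a → a` and
`a * e_i → a` for every `a`. -/
def HasBoundedApproxIdentity : Prop :=
  ∃ (ι : Type) (_ : Preorder ι) (_ : IsDirected ι (· ≤ ·)) (_ : Nonempty ι) (e : ι → A),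
    Bornology.IsVonNBounded ℂ (Set.range e) ∧
      ∀ a : A, Tendsto (fun i => e i * a) atTop (𝓝 a) ∧
        Tendsto (fun i => a * e i) atTop (𝓝 a)

/-- `A` is essential: the linear span of products is dense. -/
def IsEssential : Prop :=
  Dense ((Submodule.span ℂ {x : A | ∃ a b : A, x = a * b} : Submodule ℂ A) : Set A)

/-- `A` is self-induced: it is essential and every balanced bilinear functional
`φ` (i.e. `φ (a*c) b = φ a (c*b)`) is of the form `φ a b = f (a*b)` for some
continuous linear functional `f`. -/
def SelfInduced : Prop :=
  IsEssential A ∧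
    ∀ φ : A →ₗ[ℂ] A →ₗ[ℂ] ℂ, (∀ a b c : A, φ (a * c) b = φ a (c * b)) →
      ∃ f : A →L[ℂ] ℂ, ∀ a b : A, φ a b = f (a * b)

/-- The data of `M : BiMod A` constitutes a genuine locally convex `A`-bimodule:
the actions satisfy the bimodule laws, are `ℂ`-bilinear, jointly continuous, and
`M.X` is locally convex. -/
structure IsLCBimod (M : BiMod A) : Prop where
  lc : LocallyConvexSpace ℝ M.X
  l_mul : ∀ (a b : A) (x : M.X), M.l (a * b) x = M.l a (M.l b x)
  r_mul : ∀ (a b : A) (x : M.X), M.r (a * b) x = M.r b (M.r a x)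
  l_add : ∀ (a b : A) (x : M.X), M.l (a + b) x = M.l a x + M.l b x
  r_add : ∀ (a b : A) (x : M.X), M.r (a + b) x = M.r a x + M.r b x
  l_smul : ∀ (c : ℂ) (a : A) (x : M.X), M.l (c • a) x = c • M.l a x
  r_smul : ∀ (c : ℂ) (a : A) (x : M.X), M.r (c • a) x = c • M.r a x
  lr_comm : ∀ (a b : A) (x : M.X), M.l a (M.r b x) = M.r b (M.l a x)
  cont_l : Continuous fun q : A × M.X => M.l q.1 q.2
  cont_r : Continuous fun q : A × M.X => M.r q.1 q.2

/-- `A` is amenable: for every locally convex `A`-bimodule `X`, every continuous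
derivation from `A` into the strong dual `X*` (with the canonical dual actions)
is inner. -/
def Amenable : Prop :=
  ∀ M : BiMod A, IsLCBimod A M →
    ∀ D : A →L[ℂ] M.dual.X, IsContDerivation A M.dual D → IsInnerDerivation A M.dual D

end More

section UnitizationInstances

variable (A : Type) [NonUnitalRing A] [Module ℂ A] [SMulCommClass ℂ A A] [IsScalarTower ℂ A A]
  [TopologicalSpace A] [IsTopologicalAddGroup A] [ContinuousSMul ℂ A] [ContinuousMul A]

/-- The unitization `A# = ℂ ⊕ A` carries the product topology, which is the topology
generated by the seminorms `q_l (a, λ) = p_l a + |λ|`. -/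
instance : TopologicalSpace (Unitization ℂ A) :=
  TopologicalSpace.induced Unitization.toProd (inferInstance : TopologicalSpace (ℂ × A))

instance : IsTopologicalAddGroup (Unitization ℂ A) :=
  topologicalAddGroup_induced (Unitization.addEquiv ℂ A)

instance : ContinuousSMul ℂ (Unitization ℂ A) :=
  continuousSMul_induced (Unitization.linearEquiv ℂ ℂ A)

instance : ContinuousMul (Unitization ℂ A) where
  continuous_mul := by
    apply continuous_induced_rng.2
    have h : Continuous fun p : Unitization ℂ A × Unitization ℂ A => (p.1.toProd, p.2.toProd) :=
      (continuous_induced_dom.comp continuous_fst).prodMk (continuous_induced_dom.comp continuous_snd)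
    have h2 : Continuous fun p : (ℂ × A) × ℂ × A =>
        ((p.1.1 * p.2.1, p.1.1 • p.2.2 + p.2.1 • p.1.2 + p.1.2 * p.2.2) : ℂ × A) := by
      fun_prop
    exact h2.comp h

end UnitizationInstances

/-! Dualizing the split sequence `A → A# → ℂ` an even number of times gives
`(A#)^(2n) = A^(2n) ⊕ ℂ·E`: the inclusion of `A^(2n)` is an `A`-bimodule map with a left
inverse, `E` commutes with `A`, and the complementary functional kills
`A·(A#)^(2n) + (A#)^(2n)·A`. A derivation `A → A^(2n)` extends to `A#` through the projection
`A# → A`. Conversely, a derivation `D : A# → (A#)^(2n)` vanishes at `1`, and its scalar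
component vanishes on products, hence on `A` by the approximate identity; so `D` restricted to
`A` takes values in `A^(2n)`. In both directions the splitting carries inner derivations to
inner derivations. -/

open ContinuousLinearMap

namespace BiMod

variable {R S : Type}

instance (M : BiMod R) : FunLike M.dual.X M.X ℂ :=
  inferInstanceAs (FunLike (M.X →L[ℂ] ℂ) M.X ℂ)

instance (M : BiMod R) : ContinuousLinearMapClass M.dual.X ℂ M.X ℂ :=
  inferInstanceAs (ContinuousLinearMapClass (M.X →L[ℂ] ℂ) ℂ M.X ℂ)

@[ext]
theorem dual_ext {M : BiMod R} {f g : M.dual.X} (h : ∀ x, f x = g x) : f = g :=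
  ContinuousLinearMap.ext h

@[simp]
theorem dual_add_apply {M : BiMod R} (f g : M.dual.X) (x : M.X) : (f + g) x = f x + g x :=
  rfl

@[simp]
theorem dual_smul_apply {M : BiMod R} (c : ℂ) (f : M.dual.X) (x : M.X) : (c • f) x = c * f x :=
  rfl

@[simp]
theorem dual_l_apply (M : BiMod R) (u : R) (f : M.dual.X) (x : M.X) :
    M.dual.l u f x = f (M.r u x) :=
  rfl

@[simp]
theorem dual_r_apply (M : BiMod R) (u : R) (f : M.dual.X) (x : M.X) :
    M.dual.r u f x = f (M.l u x) :=
  rfl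

def Intertwines (P : BiMod R) (Q : BiMod S) (T : P.X →L[ℂ] Q.X) (u : R) (v : S) : Prop :=
  ∀ x, T (P.l u x) = Q.l v (T x) ∧ T (P.r u x) = Q.r v (T x)

theorem Intertwines.precomp {P : BiMod R} {Q : BiMod S} {T : P.X →L[ℂ] Q.X} {u : R} {v : S}
    (h : Intertwines P Q T u v) : Intertwines Q.dual P.dual (precomp ℂ T) v u := fun ψ => by
  constructor <;> ext x
  · exact congrArg ψ (h x).2.symm
  · exact congrArg ψ (h x).1.symm

theorem dual_dual_l_evalEmbed (M : BiMod R) [ContinuousSMul ℂ M.X] (u : R) (x : M.X) :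
    M.dual.dual.l u (M.evalEmbed x) = M.evalEmbed (M.l u x) :=
  rfl

theorem dual_dual_r_evalEmbed (M : BiMod R) [ContinuousSMul ℂ M.X] (u : R) (x : M.X) :
    M.dual.dual.r u (M.evalEmbed x) = M.evalEmbed (M.r u x) :=
  rfl

structure IsUnitalLinear [Add R] [One R] [SMul ℂ R] (M : BiMod R) : Prop where
  l_add : ∀ u v x, M.l (u + v) x = M.l u x + M.l v x
  r_add : ∀ u v x, M.r (u + v) x = M.r u x + M.r v x
  l_smul : ∀ (c : ℂ) u x, M.l (c • u) x = c • M.l u x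
  r_smul : ∀ (c : ℂ) u x, M.r (c • u) x = c • M.r u x
  l_one : ∀ x, M.l 1 x = x
  r_one : ∀ x, M.r 1 x = x

theorem IsUnitalLinear.dual [Add R] [One R] [SMul ℂ R] {M : BiMod R} (h : M.IsUnitalLinear) :
    M.dual.IsUnitalLinear where
  l_add u v ψ := by ext x; simp [h.r_add]
  r_add u v ψ := by ext x; simp [h.l_add]
  l_smul c u ψ := by ext x; simp [h.r_smul]
  r_smul c u ψ := by ext x; simp [h.l_smul]
  l_one ψ := by ext x; simp [h.r_one]
  r_one ψ := by ext x; simp [h.l_one]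

theorem IsUnitalLinear.iterDual [Add R] [One R] [SMul ℂ R] {M : BiMod R} (h : M.IsUnitalLinear) :
    ∀ n, (M.iterDual n).IsUnitalLinear
  | 0 => h
  | n + 1 => (h.iterDual n).dual

end BiMod

theorem BiMod.isUnitalLinear_selfBiMod (R : Type) [Ring R] [Module ℂ R] [SMulCommClass ℂ R R]
    [IsScalarTower ℂ R R] [TopologicalSpace R] [ContinuousMul R] :
    (selfBiMod R).IsUnitalLinear where
  l_add u v (x : R) := add_mul u v x
  r_add u v (x : R) := mul_add x u v
  l_smul c u (x : R) := smul_mul_assoc c u x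
  r_smul c u (x : R) := mul_smul_comm c x u
  l_one (x : R) := one_mul x
  r_one (x : R) := mul_one x

namespace Unitization

variable {A : Type} [AddCommGroup A] [Module ℂ A]

theorem inr_snd_add_fst_smul_one (u : Unitization ℂ A) :
    (u.snd : Unitization ℂ A) + u.fst • 1 = u := by
  ext <;> simp

variable (A) [TopologicalSpace A]

def inrCLM : A →L[ℂ] Unitization ℂ A :=
  ⟨inrHom ℂ ℂ A, continuous_induced_rng.2 (continuous_const.prodMk continuous_id)⟩

def sndCLM : Unitization ℂ A →L[ℂ] A :=
  ⟨sndHom ℂ ℂ A, continuous_snd.comp continuous_induced_dom⟩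

def fstCLM : Unitization ℂ A →L[ℂ] ℂ :=
  ⟨{ toFun := fun u => u.fst
     map_add' := fst_add
     map_smul' := fst_smul },
    continuous_fst.comp continuous_induced_dom⟩

variable {A}

@[simp] theorem inrCLM_apply (a : A) : inrCLM A a = a := rfl
@[simp] theorem sndCLM_apply (u : Unitization ℂ A) : sndCLM A u = u.snd := rfl
@[simp] theorem fstCLM_apply (u : Unitization ℂ A) : fstCLM A u = u.fst := rfl

end Unitization

namespace BiMod.IsUnitalLinear

variable {A : Type} [AddCommGroup A] [Module ℂ A] {M : BiMod (Unitization ℂ A)}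

theorem l_unitization (h : M.IsUnitalLinear) (u : Unitization ℂ A) (x : M.X) :
    M.l u x = M.l u.snd x + u.fst • x := by
  conv_lhs => rw [← u.inr_snd_add_fst_smul_one]
  rw [h.l_add, h.l_smul, h.l_one]

theorem r_unitization (h : M.IsUnitalLinear) (u : Unitization ℂ A) (x : M.X) :
    M.r u x = M.r u.snd x + u.fst • x := by
  conv_lhs => rw [← u.inr_snd_add_fst_smul_one]
  rw [h.r_add, h.r_smul, h.r_one]

end BiMod.IsUnitalLinear

/-- `M = incl N ⊕ ℂ·unit`: the shape of `(A#)^(2n) = A^(2n) ⊕ ℂ·1`, `unit` being the image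
of `1`. -/
structure UnitizationSplitting {A : Type} (M : BiMod (Unitization ℂ A)) (N : BiMod A) where
  incl : N.X →L[ℂ] M.X
  proj : M.X →L[ℂ] N.X
  scalar : M.X →L[ℂ] ℂ
  unit : M.X
  intertwines_incl : ∀ a : A, N.Intertwines M incl a a
  proj_incl : ∀ y, proj (incl y) = y
  incl_proj : ∀ x, incl (proj x) = x - scalar x • unit
  scalar_l : ∀ (a : A) x, scalar (M.l a x) = 0
  scalar_r : ∀ (a : A) x, scalar (M.r a x) = 0
  l_unit : ∀ a : A, M.l a unit = M.r a unit

namespace UnitizationSplitting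

variable {A : Type} {M : BiMod (Unitization ℂ A)} {N : BiMod A}

def dualDual [ContinuousSMul ℂ M.X] (S : UnitizationSplitting M N) :
    UnitizationSplitting M.dual.dual N.dual.dual where
  incl := precomp ℂ (precomp ℂ S.incl)
  proj := precomp ℂ (precomp ℂ S.proj)
  scalar := M.dual.evalEmbed S.scalar
  unit := M.evalEmbed S.unit
  intertwines_incl a := (S.intertwines_incl a).precomp.precomp
  proj_incl (Φ : (N.X →L[ℂ] ℂ) →L[ℂ] ℂ) := by
    refine ContinuousLinearMap.ext fun (ψ : N.X →L[ℂ] ℂ) => ?_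
    show Φ ((ψ.comp S.proj).comp S.incl) = Φ ψ
    congr 1
    ext y
    exact congrArg ψ (S.proj_incl y)
  incl_proj (Φ : (M.X →L[ℂ] ℂ) →L[ℂ] ℂ) := by
    refine ContinuousLinearMap.ext fun (ψ : M.X →L[ℂ] ℂ) => ?_
    show Φ ((ψ.comp S.incl).comp S.proj) = Φ ψ - Φ S.scalar * ψ S.unit
    have h : (ψ.comp S.incl).comp S.proj = ψ - ψ S.unit • S.scalar := by
      ext x
      simp [S.incl_proj, mul_comm]
    rw [h, map_sub, map_smul, smul_eq_mul, mul_comm]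
  scalar_l a (Φ : (M.X →L[ℂ] ℂ) →L[ℂ] ℂ) := by
    show Φ (S.scalar.comp (M.l a)) = 0
    have h : S.scalar.comp (M.l a) = 0 := ContinuousLinearMap.ext (S.scalar_l a)
    rw [h, map_zero]
  scalar_r a (Φ : (M.X →L[ℂ] ℂ) →L[ℂ] ℂ) := by
    show Φ (S.scalar.comp (M.r a)) = 0
    have h : S.scalar.comp (M.r a) = 0 := ContinuousLinearMap.ext (S.scalar_r a)
    rw [h, map_zero]
  l_unit a := by rw [BiMod.dual_dual_l_evalEmbed, BiMod.dual_dual_r_evalEmbed, S.l_unit]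

theorem incl_l (S : UnitizationSplitting M N) (a : A) (y : N.X) :
    S.incl (N.l a y) = M.l a (S.incl y) :=
  (S.intertwines_incl a y).1

theorem incl_r (S : UnitizationSplitting M N) (a : A) (y : N.X) :
    S.incl (N.r a y) = M.r a (S.incl y) :=
  (S.intertwines_incl a y).2

theorem incl_proj_of_scalar_eq_zero (S : UnitizationSplitting M N) {x : M.X}
    (hx : S.scalar x = 0) : S.incl (S.proj x) = x := by
  rw [S.incl_proj, hx, zero_smul, sub_zero]

theorem l_sub_r_eq_incl (S : UnitizationSplitting M N) (a : A) (x : M.X) :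
    M.l a x - M.r a x = S.incl (N.l a (S.proj x) - N.r a (S.proj x)) := by
  conv_lhs => rw [← sub_add_cancel x (S.scalar x • S.unit), ← S.incl_proj]
  rw [map_add, map_add, map_smul, map_smul, S.l_unit, map_sub, S.incl_l, S.incl_r]
  abel

end UnitizationSplitting

theorem HasBoundedApproxIdentity.eq_zero_of_map_mul_eq_zero {A : Type} [NonUnitalRing A]
    [Module ℂ A] [TopologicalSpace A] (hA : HasBoundedApproxIdentity A) {E : Type}
    [TopologicalSpace E] [T2Space E] [Zero E]
    {f : A → E} (hf : Continuous f) (hmul : ∀ a b, f (a * b) = 0) (a : A) : f a = 0 := by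
  obtain ⟨ι, _, _, _, e, -, he⟩ := hA
  have : (atTop : Filter ι).NeBot := atTop_neBot
  refine tendsto_nhds_unique ((hf.tendsto a).comp (he a).1) ?_
  simp only [Function.comp_def, hmul, tendsto_const_nhds]

theorem IsContDerivation.map_one {R : Type} [Ring R] [Module ℂ R] [TopologicalSpace R]
    {M : BiMod R} {D : R →L[ℂ] M.X} (hD : IsContDerivation R M D)
    (hM : M.IsUnitalLinear) : D 1 = 0 := by
  have h := hD 1 1
  rwa [mul_one, hM.l_one, hM.r_one, left_eq_add] at h

section Derivations

variable {A : Type} [NonUnitalRing A] [Module ℂ A] [SMulCommClass ℂ A A] [IsScalarTower ℂ A A]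
  [TopologicalSpace A]

theorem IsContDerivation.map_inr_mul {M : BiMod (Unitization ℂ A)}
    {D : Unitization ℂ A →L[ℂ] M.X} (hD : IsContDerivation (Unitization ℂ A) M D)
    (a b : A) : D ↑(a * b) = M.l a (D b) + M.r b (D a) :=
  (congrArg D (Unitization.inr_mul ℂ a b)).trans (hD a b)

namespace UnitizationSplitting

variable {M : BiMod (Unitization ℂ A)} {N : BiMod A}

theorem isContDerivation_comp_snd (S : UnitizationSplitting M N) (hM : M.IsUnitalLinear)
    {D : A →L[ℂ] N.X} (hD : IsContDerivation A N D) :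
    IsContDerivation (Unitization ℂ A) M (S.incl ∘L D ∘L Unitization.sndCLM A) := by
  intro u v
  simp only [ContinuousLinearMap.comp_apply, Unitization.sndCLM_apply, Unitization.snd_mul]
  rw [map_add, map_add, hD]
  simp only [map_add, map_smul, S.incl_l, S.incl_r, hM.l_unitization u, hM.r_unitization v]
  abel

theorem isInnerDerivation_of_comp_snd (S : UnitizationSplitting M N) {D : A →L[ℂ] N.X}
    (hD : IsInnerDerivation (Unitization ℂ A) M (S.incl ∘L D ∘L Unitization.sndCLM A)) :
    IsInnerDerivation A N D := by
  obtain ⟨x, hx⟩ := hD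
  refine ⟨S.proj x, fun a => ?_⟩
  have h := hx a
  simp only [ContinuousLinearMap.comp_apply, Unitization.sndCLM_apply, Unitization.snd_inr] at h
  rw [← S.proj_incl (D a), h, S.l_sub_r_eq_incl, S.proj_incl]

theorem scalar_map_eq_zero (S : UnitizationSplitting M N) (hA : HasBoundedApproxIdentity A)
    {D : Unitization ℂ A →L[ℂ] M.X} (hD : IsContDerivation (Unitization ℂ A) M D) (a : A) :
    S.scalar (D a) = 0 :=
  hA.eq_zero_of_map_mul_eq_zero (f := S.scalar ∘L D ∘L Unitization.inrCLM A)
    (ContinuousLinearMap.continuous _)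
    (fun a b => by
      simp only [ContinuousLinearMap.comp_apply, Unitization.inrCLM_apply, hD.map_inr_mul,
        map_add, S.scalar_l, S.scalar_r, add_zero])
    a

theorem isContDerivation_proj_comp_inr (S : UnitizationSplitting M N)
    {D : Unitization ℂ A →L[ℂ] M.X} (hD : IsContDerivation (Unitization ℂ A) M D)
    (hscalar : ∀ a : A, S.scalar (D a) = 0) :
    IsContDerivation A N (S.proj ∘L D ∘L Unitization.inrCLM A) := by
  intro a b
  simp only [ContinuousLinearMap.comp_apply, Unitization.inrCLM_apply, hD.map_inr_mul]
  conv_lhs => rw [← S.incl_proj_of_scalar_eq_zero (hscalar a),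
    ← S.incl_proj_of_scalar_eq_zero (hscalar b)]
  rw [← S.incl_l, ← S.incl_r, ← map_add, S.proj_incl]

theorem isInnerDerivation_of_proj_comp_inr (S : UnitizationSplitting M N) (hM : M.IsUnitalLinear)
    {D : Unitization ℂ A →L[ℂ] M.X} (hD : IsContDerivation (Unitization ℂ A) M D)
    (hscalar : ∀ a : A, S.scalar (D a) = 0)
    (hinner : IsInnerDerivation A N (S.proj ∘L D ∘L Unitization.inrCLM A)) :
    IsInnerDerivation (Unitization ℂ A) M D := by
  obtain ⟨y, hy⟩ := hinner
  refine ⟨S.incl y, fun u => ?_⟩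
  have h := hy u.snd
  simp only [ContinuousLinearMap.comp_apply, Unitization.inrCLM_apply] at h
  conv_lhs => rw [← u.inr_snd_add_fst_smul_one]
  rw [map_add, map_smul, hD.map_one hM, smul_zero, add_zero,
    ← S.incl_proj_of_scalar_eq_zero (hscalar _), h, map_sub, S.incl_l, S.incl_r,
    hM.l_unitization u, hM.r_unitization u]
  abel

theorem forall_isInnerDerivation_iff (S : UnitizationSplitting M N) (hM : M.IsUnitalLinear)
    (hA : HasBoundedApproxIdentity A) :
    (∀ D : Unitization ℂ A →L[ℂ] M.X,
        IsContDerivation (Unitization ℂ A) M D → IsInnerDerivation (Unitization ℂ A) M D) ↔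
      ∀ D : A →L[ℂ] N.X, IsContDerivation A N D → IsInnerDerivation A N D :=
  ⟨fun h _ hD => S.isInnerDerivation_of_comp_snd (h _ (S.isContDerivation_comp_snd hM hD)),
    fun h _ hD =>
      have hscalar := S.scalar_map_eq_zero hA hD
      S.isInnerDerivation_of_proj_comp_inr hM hD hscalar
        (h _ (S.isContDerivation_proj_comp_inr hD hscalar))⟩

end UnitizationSplitting

end Derivations

section EvenDuals

variable {A : Type} [NonUnitalRing A] [Module ℂ A] [SMulCommClass ℂ A A] [IsScalarTower ℂ A A]
  [TopologicalSpace A] [IsTopologicalAddGroup A] [ContinuousSMul ℂ A] [ContinuousMul A]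

namespace UnitizationSplitting

def self : UnitizationSplitting (selfBiMod (Unitization ℂ A)) (selfBiMod A) where
  incl := Unitization.inrCLM A
  proj := Unitization.sndCLM A
  scalar := Unitization.fstCLM A
  unit := (1 : Unitization ℂ A)
  intertwines_incl a (b : A) := ⟨Unitization.inr_mul ℂ a b, Unitization.inr_mul ℂ b a⟩
  proj_incl (b : A) := Unitization.snd_inr ℂ b
  incl_proj (u : Unitization ℂ A) := eq_sub_of_add_eq u.inr_snd_add_fst_smul_one
  scalar_l a (u : Unitization ℂ A) := show ((a : Unitization ℂ A) * u).fst = 0 by simp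
  scalar_r a (u : Unitization ℂ A) := show (u * (a : Unitization ℂ A)).fst = 0 by simp
  l_unit a := (mul_one (a : Unitization ℂ A)).trans (one_mul _).symm

def evenDual : (n : ℕ) → UnitizationSplitting
    ((selfBiMod (Unitization ℂ A)).iterDual (2 * n)) ((selfBiMod A).iterDual (2 * n))
  | 0 => self
  | n + 1 =>
    haveI := (selfBiMod (Unitization ℂ A)).iterCSM
      (inferInstanceAs (ContinuousSMul ℂ (Unitization ℂ A))) (2 * n)
    (evenDual n).dualDual

end UnitizationSplitting

end EvenDuals

theorem unitization_even_weaklyAmenable_iff_of_bai_general (A : Type) [NonUnitalRing A] [Module ℂ A] [SMulCommClass ℂ A A]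
    [IsScalarTower ℂ A A] [UniformSpace A] [IsUniformAddGroup A] [ContinuousSMul ℂ A]
    [ContinuousMul A]
    (hbai : HasBoundedApproxIdentity A) (n : ℕ) :
    NWeaklyAmenable (Unitization ℂ A) (2 * n) ↔ NWeaklyAmenable A (2 * n) :=
  (UnitizationSplitting.evenDual n).forall_isInnerDerivation_iff
    ((BiMod.isUnitalLinear_selfBiMod _).iterDual _) hbai

/-- For a Fréchet algebra `A` with a bounded approximate identity, the unitization
`A#` is `2n`-weakly amenable iff `A` is `2n`-weakly amenable. -/
theorem unitization_even_weaklyAmenable_iff_of_bai (A : Type) [NonUnitalRing A] [Module ℂ A] [SMulCommClass ℂ A A]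
    [IsScalarTower ℂ A A] [UniformSpace A] [IsUniformAddGroup A] [ContinuousSMul ℂ A]
    [ContinuousMul A] [CompleteSpace A] [T2Space A] (hA : FrechetSeminorms A)
    (hbai : HasBoundedApproxIdentity A) (n : ℕ) :
    NWeaklyAmenable (Unitization ℂ A) (2 * n) ↔ NWeaklyAmenable A (2 * n) :=
  unitization_even_weaklyAmenable_iff_of_bai_general A hbai n
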